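/- There exists a constant C ≥ 0, depending only on m, ω, k₀,…,k_m, l₀,…,l_m, l_J, m₀,…,m_m, m_J and I₀, with the following property. Let ε ∈ (0, ω/4), γ ∈ ℝ, h ∈ ℤ, and φ ∈ Ω satisfy: (i) |θ_{i+h} − θ_i − γ| < ε for all i ∈ ℤ; (ii) ‖φ(t + γ) − φ(t)‖ < ε for every t ∈ ℝ with |t − θ_i| > ε for all i ∈ ℤ; (iii) ‖φ(θ_{i+h}) − φ(θ_i)‖ < ε for all i ∈ ℤ. Then for every t ∈ ℝ with |t − θ_i| > ε for all i ∈ ℤ, one has ‖(Tφ)(t + γ) − (Tφ)(t)‖ ≤ C·ε. (This is the key almost-period transfer estimate in the proof of assertion 3 of Theorem 1, on discontinuous almost periodic solutions.) -/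

import Mathlib

/-- The Euclidean norm on `Fin n → ℝ`. -/
noncomputable def eNorm {n : ℕ} (v : Fin n → ℝ) : ℝ := Real.sqrt (∑ j, v j ^ 2)

/-- The operator `T` of the paper: coordinate `0` (the systemic arterial pressure) gets
`(Tφ)₀(t) = −∫_{−∞}^t e^{−k₀(t−s)} g₀(φ₀(s)−φ₁(s),…,φ₀(s)−φ_m(s)) ds
  + Σ_{θ_i < t} e^{−k₀(t−θ_i)} (I₀ + J₀(φ₀(θ_i)))`,
and the compartment coordinates `j = 1,…,m` (nonzero indices of `Fin (m+1)`) get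
`(Tφ)_j(t) = ∫_{−∞}^t e^{−k_j(t−s)} g_j(φ₀(s)−φ_j(s)) ds`. -/
noncomputable def Tmap (m : ℕ) (θ : ℤ → ℝ) (k : Fin (m + 1) → ℝ) (I₀ : ℝ)
    (g₀ : (Fin m → ℝ) → ℝ) (g : Fin (m + 1) → ℝ → ℝ) (J₀ : ℝ → ℝ)
    (φ : ℝ → Fin (m + 1) → ℝ) : ℝ → Fin (m + 1) → ℝ := fun t j =>
  if j = 0 then
    -(∫ s in Set.Iic t, Real.exp (-(k 0) * (t - s)) * g₀ (fun i => φ s 0 - φ s i.succ))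
      + ∑' i : ℤ, (if θ i < t then Real.exp (-(k 0) * (t - θ i)) * (I₀ + J₀ (φ (θ i) 0)) else 0)
  else
    ∫ s in Set.Iic t, Real.exp (-(k j) * (t - s)) * g j (φ s 0 - φ s j)

/-- The set `Ω`: bounded measurable functions `φ : ℝ → ℝ^{m+1}` with
`|φ₀(t)| ≤ m₀/k₀ + (I₀ + m_J)·e^{k₀ω}/(1 − e^{−k₀ω})` and `|φ_j(t)| ≤ m_j/k_j`. -/
def OmegaSet (m : ℕ) (ω : ℝ) (k mc : Fin (m + 1) → ℝ) (I₀ mJ : ℝ) :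
    Set (ℝ → Fin (m + 1) → ℝ) :=
  {φ | Measurable φ ∧ (∃ B, ∀ t, eNorm (φ t) ≤ B) ∧ ∀ t,
    |φ t 0| ≤ mc 0 / k 0 + (I₀ + mJ) * Real.exp (k 0 * ω) / (1 - Real.exp (-(k 0) * ω)) ∧
    ∀ j, j ≠ 0 → |φ t j| ≤ mc j / k j}

/-!
Each coordinate of `Tφ` is the past of a bounded function `G` seen through the kernel
`e^{-k(t-s)}`, and coordinate `0` also carries the impulses `θ_i < t` with the same weights.
Shifting `t` by `γ` turns the difference of the integrals into the kernel integrated against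
`G(s + γ) - G(s)`: away from the `ε`-neighbourhood of the impulse times this is `O(ε)` by (ii)
and the Lipschitz bounds, and since each period of length `ω` contains exactly one `θ_i`, that
neighbourhood carries kernel mass `O(ε)`. As `t` is `ε`-far from every `θ_i`, the impulse
`θ_{i+h}` precedes `t + γ` exactly when `θ_i` precedes `t`; after reindexing by `h`, (i) and (iii)
compare the two impulse sums term by term, and the weights `e^{-k(t-θ_i)}` of past impulses are
dominated by a geometric series.
-/

open MeasureTheory Real Set

lemma abs_le_eNorm {n : ℕ} (v : Fin n → ℝ) (j : Fin n) : |v j| ≤ eNorm v := by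
  rw [eNorm, ← sqrt_sq_eq_abs]
  exact sqrt_le_sqrt (Finset.single_le_sum (fun i _ => sq_nonneg (v i)) (Finset.mem_univ j))

lemma eNorm_le_sum_abs {n : ℕ} (v : Fin n → ℝ) : eNorm v ≤ ∑ j, |v j| := by
  rw [eNorm, sqrt_le_left (Finset.sum_nonneg fun j _ => abs_nonneg (v j))]
  simpa only [sq_abs] using Finset.sum_sq_le_sq_sum_of_nonneg fun j _ => abs_nonneg (v j)

lemma abs_sub_le_two_mul_of_eNorm_le {n : ℕ} {v : Fin n → ℝ} {ε : ℝ} (hv : eNorm v ≤ ε)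
    (i j : Fin n) : |v i - v j| ≤ 2 * ε :=
  (abs_sub _ _).trans (by linarith [abs_le_eNorm v i, abs_le_eNorm v j])

lemma continuous_of_abs_sub_le_mul_eNorm {n : ℕ} {f : (Fin n → ℝ) → ℝ} {L : ℝ}
    (hf : ∀ z w, |f z - f w| ≤ L * eNorm (fun i => z i - w i)) : Continuous f := by
  refine continuous_iff_continuousAt.2 fun z => tendsto_iff_norm_sub_tendsto_zero.2 ?_
  have hc : Continuous fun w : Fin n → ℝ => L * eNorm (fun i => w i - z i) := by
    unfold eNorm; fun_prop
  exact squeeze_zero (fun _ => norm_nonneg _) (fun w => hf w z)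
    (by simpa [eNorm] using hc.tendsto z)

lemma abs_exp_sub_one_le_mul_exp (x : ℝ) : |exp x - 1| ≤ |x| * exp |x| := by
  rcases le_total 0 x with hx | hx
  · have h := mul_le_mul_of_nonneg_right (add_one_le_exp (-x)) (exp_pos x).le
    rw [← exp_add, neg_add_cancel, exp_zero] at h
    rw [abs_of_nonneg hx, abs_of_nonneg (by linarith [add_one_le_exp x])]
    linarith
  · rw [abs_of_nonpos hx, abs_of_nonpos (by linarith [exp_le_one_iff.2 hx])]
    nlinarith [add_one_le_exp x, one_le_exp (neg_nonneg.2 hx)]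

lemma abs_tsum_mul_sub_tsum_mul_le {ι : Type*} {w a b : ι → ℝ} (hw0 : ∀ i, 0 ≤ w i)
    (hw : Summable w) {B D : ℝ} (hb : ∀ i, |b i| ≤ B) (hab : ∀ i, |a i - b i| ≤ D) :
    |∑' i, w i * a i - ∑' i, w i * b i| ≤ D * ∑' i, w i := by
  have hbound : ∀ {c : ι → ℝ} {C : ℝ}, (∀ i, |c i| ≤ C) → ∀ i, ‖w i * c i‖ ≤ C * w i :=
    fun hc i => by
      rw [norm_eq_abs, abs_mul, abs_of_nonneg (hw0 i), mul_comm]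
      exact mul_le_mul_of_nonneg_right (hc i) (hw0 i)
  have hsb : Summable fun i => w i * b i := .of_norm_bounded (hw.mul_left B) (hbound hb)
  have hsd : Summable fun i => w i * (a i - b i) := .of_norm_bounded (hw.mul_left D) (hbound hab)
  have hsplit : ∀ i, w i * a i = w i * (a i - b i) + w i * b i := fun i => by ring
  simp_rw [hsplit]
  rw [hsd.tsum_add hsb, add_sub_cancel_right, ← tsum_mul_left]
  exact tsum_of_norm_bounded (hw.mul_left D).hasSum (hbound hab)

lemma setIntegral_Iic_add (f : ℝ → ℝ) (t γ : ℝ) :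
    ∫ s in Iic (t + γ), f s = ∫ s in Iic t, f (s + γ) := by
  rw [← (measurePreserving_add_right volume γ).setIntegral_preimage_emb
    (measurableEmbedding_addRight γ)]
  simp

lemma exp_neg_mul_sub (k t s : ℝ) : exp (-k * (t - s)) = exp (-(k * t)) * exp (k * s) := by
  rw [← exp_add]; ring_nf

lemma integrableOn_exp_kernel {k : ℝ} (hk : 0 < k) (t : ℝ) :
    IntegrableOn (fun s => exp (-k * (t - s))) (Iic t) := by
  simp_rw [exp_neg_mul_sub]
  exact (integrableOn_exp_mul_Iic hk t).const_mul _

lemma integral_exp_kernel {k : ℝ} (hk : 0 < k) (t : ℝ) :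
    ∫ s in Iic t, exp (-k * (t - s)) = 1 / k := by
  simp_rw [exp_neg_mul_sub, integral_const_mul, integral_exp_mul_Iic hk, mul_div_assoc',
    ← exp_add]
  simp

lemma integrableOn_exp_kernel_mul {k : ℝ} (hk : 0 < k) (t : ℝ) {F : ℝ → ℝ} (hF : Measurable F)
    {M : ℝ} (hFM : ∀ s, |F s| ≤ M) :
    IntegrableOn (fun s => exp (-k * (t - s)) * F s) (Iic t) :=
  (integrableOn_exp_kernel hk t).mul_bdd hF.aestronglyMeasurable (.of_forall hFM)

noncomputable def expWeight (k : ℝ) (θ : ℤ → ℝ) (u : ℝ) (i : ℤ) : ℝ :=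
  if θ i < u then exp (-k * (u - θ i)) else 0

noncomputable def expWeightBound (k ω : ℝ) : ℝ := exp (k * ω) / (1 - exp (-(k * ω)))

def impulseNbhd (θ : ℤ → ℝ) (ε : ℝ) : Set ℝ := ⋃ i, Metric.closedBall (θ i) ε

noncomputable def expConv (k : ℝ) (G : ℝ → ℝ) (t : ℝ) : ℝ :=
  ∫ s in Iic t, exp (-k * (t - s)) * G s

noncomputable def impulseSum (k : ℝ) (θ c : ℤ → ℝ) (t : ℝ) : ℝ :=
  ∑' i, expWeight k θ t i * c i

lemma measurableSet_impulseNbhd (θ : ℤ → ℝ) (ε : ℝ) : MeasurableSet (impulseNbhd θ ε) :=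
  .iUnion fun _ => measurableSet_closedBall

lemma notMem_impulseNbhd {θ : ℤ → ℝ} {ε s : ℝ} :
    s ∉ impulseNbhd θ ε ↔ ∀ i, ε < |s - θ i| := by
  simp [impulseNbhd, dist_eq]

section Sampling

variable {ω k : ℝ} {θ : ℤ → ℝ}

lemma expWeightBound_pos (hk : 0 < k) (hω : 0 < ω) : 0 < expWeightBound k ω :=
  div_pos (exp_pos _) (sub_pos.2 (exp_lt_one_iff.2 (by nlinarith)))

lemma expWeight_nonneg (u : ℝ) (i : ℤ) : 0 ≤ expWeight k θ u i := by
  unfold expWeight; split_ifs <;> positivity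

lemma expWeight_eq_zero_of_notMem_range (hω : 0 < ω) (hθ : ∀ i : ℤ, i * ω ≤ θ i) (u : ℝ)
    {i : ℤ} (hi : i ∉ range fun n : ℕ => ⌈u / ω⌉ - 1 - n) : expWeight k θ u i = 0 := by
  refine if_neg fun hθu => hi ⟨(⌈u / ω⌉ - 1 - i).toNat, ?_⟩
  have : (i : ℝ) < ⌈u / ω⌉ :=
    ((lt_div_iff₀ hω).2 ((hθ i).trans_lt hθu)).trans_le (Int.le_ceil _)
  have : i < ⌈u / ω⌉ := by exact_mod_cast this
  simp only
  omega

lemma expWeight_le_geometric (hω : 0 < ω) (hθ : ∀ i : ℤ, θ i < (i + 1) * ω) (hk : 0 < k)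
    (u : ℝ) (n : ℕ) :
    expWeight k θ u (⌈u / ω⌉ - 1 - n) ≤ exp (k * ω) * exp (-(k * ω)) ^ n := by
  unfold expWeight
  split_ifs
  · have hN : (⌈u / ω⌉ : ℝ) * ω < u + ω := by
      have := Int.ceil_lt_add_one (u / ω)
      rwa [← lt_div_iff₀ hω, add_div, div_self hω.ne']
    have hθn := hθ (⌈u / ω⌉ - 1 - n)
    push_cast at hθn
    rw [← exp_nat_mul, ← exp_add]
    exact exp_le_exp.2 (by nlinarith)
  · positivity

lemma summable_expWeight_and_tsum_le (hω : 0 < ω)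
    (hθ : ∀ i : ℤ, i * ω ≤ θ i ∧ θ i < (i + 1) * ω) (hk : 0 < k) (u : ℝ) :
    Summable (expWeight k θ u) ∧ ∑' i, expWeight k θ u i ≤ expWeightBound k ω := by
  have hr : exp (-(k * ω)) < 1 := exp_lt_one_iff.2 (by nlinarith)
  have hgeom := (hasSum_geometric_of_lt_one (exp_pos _).le hr).mul_left (exp (k * ω))
  have hinj : Function.Injective fun n : ℕ => ⌈u / ω⌉ - 1 - n := fun a b hab => by
    simpa using hab
  have hsupp := fun i => expWeight_eq_zero_of_notMem_range (k := k) hω (fun i => (hθ i).1) u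
    (i := i)
  have hle := expWeight_le_geometric hω (fun i => (hθ i).2) hk u
  have hsum : Summable fun n : ℕ => expWeight k θ u (⌈u / ω⌉ - 1 - n) :=
    hgeom.summable.of_nonneg_of_le (fun n => expWeight_nonneg u _) hle
  refine ⟨(hinj.summable_iff hsupp).1 hsum, ?_⟩
  rw [← hinj.tsum_eq (Function.support_subset_iff'.2 hsupp), expWeightBound,
    div_eq_mul_inv (exp _), ← hgeom.tsum_eq]
  exact hsum.tsum_le_tsum hle hgeom.summable

/-- Because `t` is `ε`-far from `θ i`, the impulse `θ (i + h)` lies before `t + γ` exactly when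
`θ i` lies before `t`. -/
lemma expWeight_add_eq {ε γ t : ℝ} {h i : ℤ} (hγ : |θ (i + h) - θ i - γ| < ε)
    (ht : ε < |t - θ i|) :
    expWeight k θ (t + γ) (i + h) = expWeight k θ t i * exp (-k * (γ - (θ (i + h) - θ i))) := by
  have hiff : θ (i + h) < t + γ ↔ θ i < t := by
    rw [abs_sub_lt_iff] at hγ
    rcases lt_abs.1 ht with ht | ht <;> constructor <;> intro <;> linarith
  simp only [expWeight, hiff, ite_zero_mul, ← exp_add]
  ring_nf

lemma abs_impulseSum_add_sub_le (hω : 0 < ω) (hθ : ∀ i : ℤ, i * ω ≤ θ i ∧ θ i < (i + 1) * ω)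
    (hk : 0 < k) {ε γ t M L : ℝ} {h : ℤ} (hεω : ε ≤ ω) {c : ℤ → ℝ} (hcM : ∀ i, |c i| ≤ M)
    (hcL : ∀ i, |c (i + h) - c i| ≤ L * ε) (hγ : ∀ i, |θ (i + h) - θ i - γ| < ε)
    (ht : ∀ i, ε < |t - θ i|) :
    |impulseSum k θ c (t + γ) - impulseSum k θ c t|
      ≤ (k * M * exp (k * ω) + L) * expWeightBound k ω * ε := by
  set d : ℤ → ℝ := fun i => γ - (θ (i + h) - θ i)
  have hd : ∀ i, |d i| ≤ ε := fun i => by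
    simpa only [d, ← neg_sub γ, abs_neg] using (hγ i).le
  have hε : 0 ≤ ε := (abs_nonneg _).trans (hd 0)
  have hreindex : impulseSum k θ c (t + γ)
      = ∑' i, expWeight k θ t i * (exp (-k * d i) * c (i + h)) := by
    rw [impulseSum, ← (Equiv.addRight h).tsum_eq]
    simp only [Equiv.coe_addRight, expWeight_add_eq (hγ _) (ht _), mul_assoc, d]
  have hterm : ∀ i, |exp (-k * d i) * c (i + h) - c i| ≤ (k * M * exp (k * ω) + L) * ε := by
    intro i
    have hkd : |-k * d i| ≤ k * ε := by
      rw [abs_mul, abs_neg, abs_of_pos hk]; exact mul_le_mul_of_nonneg_left (hd i) hk.le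
    have hexp : |exp (-k * d i) - 1| ≤ k * ε * exp (k * ω) :=
      (abs_exp_sub_one_le_mul_exp _).trans (mul_le_mul hkd (exp_le_exp.2 (by nlinarith))
        (exp_pos _).le (by positivity))
    calc |exp (-k * d i) * c (i + h) - c i|
        = |(exp (-k * d i) - 1) * c (i + h) + (c (i + h) - c i)| := by ring_nf
      _ ≤ k * ε * exp (k * ω) * M + L * ε := by
        refine (abs_add_le _ _).trans (add_le_add ?_ (hcL i))
        rw [abs_mul]
        exact mul_le_mul hexp (hcM _) (abs_nonneg _) (by positivity)
      _ = _ := by ring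
  obtain ⟨hsum, htsum⟩ := summable_expWeight_and_tsum_le hω hθ hk t
  rw [hreindex, impulseSum]
  refine (abs_tsum_mul_sub_tsum_mul_le (expWeight_nonneg t) hsum hcM hterm).trans ?_
  rw [mul_right_comm _ (expWeightBound k ω)]
  exact mul_le_mul_of_nonneg_left htsum ((abs_nonneg _).trans (hterm 0))

lemma setIntegral_exp_kernel_impulseNbhd_le (hω : 0 < ω)
    (hθ : ∀ i : ℤ, i * ω ≤ θ i ∧ θ i < (i + 1) * ω) (hk : 0 < k) {ε : ℝ} (hε : 0 < ε)
    (hεω : ε ≤ ω) (t : ℝ) :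
    ∫ s in Iic t ∩ impulseNbhd θ ε, exp (-k * (t - s))
      ≤ 2 * exp (3 * k * ω) * expWeightBound k ω * ε := by
  -- centring the weights at `t + 2ε` makes every ball that meets `Iic t` count
  obtain ⟨hsum, htsum⟩ := summable_expWeight_and_tsum_le hω hθ hk (t + 2 * ε)
  set w := expWeight k θ (t + 2 * ε)
  have hw0 : ∀ i, 0 ≤ w i := expWeight_nonneg _
  have hball : ∀ i, ∀ s ∈ Iic t ∩ Metric.closedBall (θ i) ε,
      exp (-k * (t - s)) ≤ exp (3 * k * ε) * w i := by
    rintro i s ⟨hst, hs⟩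
    rw [mem_Iic] at hst
    rw [Metric.mem_closedBall, dist_eq, abs_le] at hs
    simp only [w, expWeight]
    rw [if_pos (by linarith), ← exp_add]
    exact exp_le_exp.2 (by nlinarith)
  have hterm : ∀ i, ∫⁻ s in Iic t ∩ Metric.closedBall (θ i) ε, ENNReal.ofReal (exp (-k * (t - s)))
      ≤ ENNReal.ofReal (2 * ε * exp (3 * k * ε) * w i) := fun i => calc
    _ ≤ ∫⁻ _ in Iic t ∩ Metric.closedBall (θ i) ε, ENNReal.ofReal (exp (3 * k * ε) * w i) :=
        setLIntegral_mono' (measurableSet_Iic.inter measurableSet_closedBall)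
          fun s hs => ENNReal.ofReal_le_ofReal (hball i s hs)
    _ ≤ ENNReal.ofReal (exp (3 * k * ε) * w i) * volume (Metric.closedBall (θ i) ε) := by
        rw [setLIntegral_const]; gcongr; exact inter_subset_right
    _ = _ := by
        rw [Real.volume_closedBall, ← ENNReal.ofReal_mul (by positivity [hw0 i])]
        ring_nf
  have hint : IntegrableOn (fun s => exp (-k * (t - s))) (Iic t ∩ impulseNbhd θ ε) :=
    (integrableOn_exp_kernel hk t).mono_set inter_subset_left
  rw [← ENNReal.ofReal_le_ofReal_iff (by positivity [expWeightBound_pos hk hω]),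
    ofReal_integral_eq_lintegral_ofReal hint (.of_forall fun _ => (exp_pos _).le)]
  calc _ ≤ ∑' i, ∫⁻ s in Iic t ∩ Metric.closedBall (θ i) ε,
          ENNReal.ofReal (exp (-k * (t - s))) := by
        rw [impulseNbhd, inter_iUnion]; exact lintegral_iUnion_le _ _
    _ ≤ ∑' i, ENNReal.ofReal (2 * ε * exp (3 * k * ε) * w i) := ENNReal.tsum_le_tsum hterm
    _ = ENNReal.ofReal (2 * ε * exp (3 * k * ε) * ∑' i, w i) := by
        rw [← ENNReal.ofReal_tsum_of_nonneg (fun i => by positivity [hw0 i]) (hsum.mul_left _),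
          tsum_mul_left]
    _ ≤ _ := by
        gcongr ENNReal.ofReal ?_
        calc 2 * ε * exp (3 * k * ε) * ∑' i, w i
            ≤ 2 * ε * exp (3 * k * ω) * expWeightBound k ω := by
              gcongr; exact tsum_nonneg hw0
          _ = _ := by ring

lemma abs_setIntegral_exp_kernel_mul_le (hω : 0 < ω)
    (hθ : ∀ i : ℤ, i * ω ≤ θ i ∧ θ i < (i + 1) * ω) (hk : 0 < k) {ε : ℝ} (hε : 0 < ε)
    (hεω : ε ≤ ω) {F : ℝ → ℝ} (hF : Measurable F) {M δ : ℝ} (hFM : ∀ s, |F s| ≤ M)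
    (hδ : 0 ≤ δ) (hFδ : ∀ s, (∀ i, ε < |s - θ i|) → |F s| ≤ δ) (t : ℝ) :
    |∫ s in Iic t, exp (-k * (t - s)) * F s|
      ≤ δ / k + M * (2 * exp (3 * k * ω) * expWeightBound k ω * ε) := by
  set N := impulseNbhd θ ε
  have he := integrableOn_exp_kernel hk t
  have heN : IntegrableOn (N.indicator fun s => exp (-k * (t - s))) (Iic t) :=
    he.indicator (measurableSet_impulseNbhd θ ε)
  have hpt : ∀ s, |exp (-k * (t - s)) * F s|
      ≤ δ * exp (-k * (t - s)) + M * N.indicator (fun s => exp (-k * (t - s))) s := by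
    intro s
    rw [abs_mul, abs_of_pos (exp_pos _)]
    by_cases hs : s ∈ N
    · rw [indicator_of_mem hs]
      nlinarith [hFM s, exp_pos (-k * (t - s))]
    · rw [indicator_of_notMem hs, mul_zero, add_zero, mul_comm]
      exact mul_le_mul_of_nonneg_right (hFδ s (notMem_impulseNbhd.1 hs)) (exp_pos _).le
  calc _ ≤ ∫ s in Iic t, |exp (-k * (t - s)) * F s| := abs_integral_le_integral_abs
    _ ≤ ∫ s in Iic t, (δ * exp (-k * (t - s)) + M * N.indicator (fun s => exp (-k * (t - s))) s) :=
        integral_mono (integrableOn_exp_kernel_mul hk t hF hFM).abs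
          ((he.const_mul δ).add (heN.const_mul M)) hpt
    _ = δ / k + M * ∫ s in Iic t ∩ N, exp (-k * (t - s)) := by
        rw [integral_add (he.const_mul δ) (heN.const_mul M), integral_const_mul,
          integral_const_mul, integral_exp_kernel hk,
          setIntegral_indicator (measurableSet_impulseNbhd θ ε), mul_one_div]
    _ ≤ _ := by
        gcongr
        · exact (abs_nonneg _).trans (hFM t)
        · exact setIntegral_exp_kernel_impulseNbhd_le hω hθ hk hε hεω t

lemma expConv_add_sub (hk : 0 < k) {G : ℝ → ℝ} (hG : Measurable G) {M : ℝ}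
    (hGM : ∀ s, |G s| ≤ M) (t γ : ℝ) :
    expConv k G (t + γ) - expConv k G t
      = ∫ s in Iic t, exp (-k * (t - s)) * (G (s + γ) - G s) := by
  have hshift : expConv k G (t + γ) = ∫ s in Iic t, exp (-k * (t - s)) * G (s + γ) := by
    simp only [expConv, setIntegral_Iic_add, add_sub_add_right_eq_sub]
  have hGγ : Measurable fun s => G (s + γ) := hG.comp (measurable_add_const γ)
  rw [hshift, expConv, ← integral_sub (integrableOn_exp_kernel_mul hk t hGγ fun s => hGM _)
    (integrableOn_exp_kernel_mul hk t hG hGM)]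
  simp only [mul_sub]

lemma abs_expConv_add_sub_le (hω : 0 < ω) (hθ : ∀ i : ℤ, i * ω ≤ θ i ∧ θ i < (i + 1) * ω)
    (hk : 0 < k) {ε : ℝ} (hε : 0 < ε) (hεω : ε ≤ ω) {G : ℝ → ℝ} (hG : Measurable G)
    {M L γ : ℝ} (hGM : ∀ s, |G s| ≤ M) (hL : 0 ≤ L)
    (hGγ : ∀ s, (∀ i, ε < |s - θ i|) → |G (s + γ) - G s| ≤ L * ε) (t : ℝ) :
    |expConv k G (t + γ) - expConv k G t|
      ≤ (L / k + 4 * M * exp (3 * k * ω) * expWeightBound k ω) * ε := by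
  rw [expConv_add_sub hk hG hGM]
  have hGγM : ∀ s, |G (s + γ) - G s| ≤ 2 * M := fun s =>
    (abs_sub _ _).trans (by linarith [hGM (s + γ), hGM s])
  exact (abs_setIntegral_exp_kernel_mul_le hω hθ hk hε hεω
    ((hG.comp (measurable_add_const γ)).sub hG) hGγM (by positivity) hGγ t).trans_eq (by ring)

end Sampling

section Model

variable {m : ℕ} {θ : ℤ → ℝ} {k : Fin (m + 1) → ℝ} {I₀ : ℝ} {g₀ : (Fin m → ℝ) → ℝ}
  {g : Fin (m + 1) → ℝ → ℝ} {J₀ : ℝ → ℝ} {φ : ℝ → Fin (m + 1) → ℝ} {ω ε γ : ℝ}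

lemma Tmap_apply_zero (t : ℝ) :
    Tmap m θ k I₀ g₀ g J₀ φ t 0
      = -expConv (k 0) (fun s => g₀ fun i => φ s 0 - φ s i.succ) t
        + impulseSum (k 0) θ (fun i => I₀ + J₀ (φ (θ i) 0)) t := by
  simp only [Tmap, if_pos, expConv, impulseSum, expWeight, ite_zero_mul]

lemma Tmap_apply_succ (t : ℝ) (i : Fin m) :
    Tmap m θ k I₀ g₀ g J₀ φ t i.succ
      = expConv (k i.succ) (fun s => g i.succ (φ s 0 - φ s i.succ)) t :=
  if_neg (Fin.succ_ne_zero i)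

lemma abs_Tmap_add_sub_succ_le (hω : 0 < ω) (hθ : ∀ i : ℤ, i * ω ≤ θ i ∧ θ i < (i + 1) * ω)
    (hε : 0 < ε) (hεω : ε ≤ ω) (hφ : Measurable φ)
    (hφγ : ∀ s, (∀ i, ε < |s - θ i|) → eNorm (fun j => φ (s + γ) j - φ s j) < ε)
    (i : Fin m) (hk : 0 < k i.succ) {l M : ℝ} (hl : 0 ≤ l)
    (hglip : ∀ a b, |g i.succ a - g i.succ b| ≤ l * |a - b|) (hgM : ∀ a, |g i.succ a| ≤ M)
    (t : ℝ) :
    |Tmap m θ k I₀ g₀ g J₀ φ (t + γ) i.succ - Tmap m θ k I₀ g₀ g J₀ φ t i.succ|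
      ≤ (2 * l / k i.succ + 4 * M * exp (3 * k i.succ * ω) * expWeightBound (k i.succ) ω) * ε := by
  rw [Tmap_apply_succ, Tmap_apply_succ]
  have hg : Continuous (g i.succ) := (LipschitzWith.of_dist_le' (K := l) fun a b => by
    simpa only [dist_eq] using hglip a b).continuous
  refine abs_expConv_add_sub_le hω hθ hk hε hεω (G := fun s => g i.succ (φ s 0 - φ s i.succ))
    (L := 2 * l)
    (hg.measurable.comp (hφ.eval.sub hφ.eval)) (fun s => hgM _) (by positivity) (fun s hs => ?_) t
  calc _ ≤ l * |(φ (s + γ) 0 - φ s 0) - (φ (s + γ) i.succ - φ s i.succ)| :=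
        (hglip _ _).trans_eq (by congr 2; ring)
    _ ≤ l * (2 * ε) := by gcongr; exact abs_sub_le_two_mul_of_eNorm_le (hφγ s hs).le 0 i.succ
    _ = 2 * l * ε := by ring

lemma abs_Tmap_add_sub_zero_le (hω : 0 < ω) (hθ : ∀ i : ℤ, i * ω ≤ θ i ∧ θ i < (i + 1) * ω)
    (hε : 0 < ε) (hεω : ε ≤ ω) (hφ : Measurable φ)
    (hφγ : ∀ s, (∀ i, ε < |s - θ i|) → eNorm (fun j => φ (s + γ) j - φ s j) < ε)
    {h : ℤ} (hγ : ∀ i, |θ (i + h) - θ i - γ| < ε)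
    (hφθ : ∀ i, eNorm (fun j => φ (θ (i + h)) j - φ (θ i) j) < ε)
    (hk : 0 < k 0) {l₀ M lJ mJ : ℝ} (hl₀ : 0 ≤ l₀) (hlJ : 0 ≤ lJ)
    (hg₀lip : ∀ z w, |g₀ z - g₀ w| ≤ l₀ * eNorm (fun i => z i - w i)) (hg₀M : ∀ z, |g₀ z| ≤ M)
    (hJlip : ∀ a b, |J₀ a - J₀ b| ≤ lJ * |a - b|) (hJM : ∀ a, |J₀ a| ≤ mJ)
    {t : ℝ} (ht : ∀ i, ε < |t - θ i|) :
    |Tmap m θ k I₀ g₀ g J₀ φ (t + γ) 0 - Tmap m θ k I₀ g₀ g J₀ φ t 0|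
      ≤ (2 * m * l₀ / k 0 + 4 * M * exp (3 * k 0 * ω) * expWeightBound (k 0) ω
        + (k 0 * (|I₀| + mJ) * exp (k 0 * ω) + lJ) * expWeightBound (k 0) ω) * ε := by
  rw [Tmap_apply_zero, Tmap_apply_zero]
  set G₀ : ℝ → ℝ := fun s => g₀ fun i => φ s 0 - φ s i.succ
  set c : ℤ → ℝ := fun i => I₀ + J₀ (φ (θ i) 0)
  have hG₀ : Measurable G₀ := (continuous_of_abs_sub_le_mul_eNorm hg₀lip).measurable.comp
    (measurable_pi_lambda _ fun i => hφ.eval.sub hφ.eval)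
  have hG₀γ : ∀ s, (∀ i, ε < |s - θ i|) → |G₀ (s + γ) - G₀ s| ≤ 2 * m * l₀ * ε := fun s hs =>
    calc _ ≤ l₀ * eNorm fun i => (φ (s + γ) 0 - φ (s + γ) i.succ) - (φ s 0 - φ s i.succ) :=
          hg₀lip _ _
      _ ≤ l₀ * ∑ _i : Fin m, 2 * ε := by
          gcongr
          refine (eNorm_le_sum_abs _).trans (Finset.sum_le_sum fun i _ => ?_)
          refine Eq.trans_le ?_ (abs_sub_le_two_mul_of_eNorm_le (hφγ s hs).le 0 i.succ)
          ring_nf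
      _ = 2 * m * l₀ * ε := by
          rw [Finset.sum_const, Finset.card_univ, Fintype.card_fin, nsmul_eq_mul]; ring
  have hcM : ∀ i, |c i| ≤ |I₀| + mJ := fun i =>
    (abs_add_le _ _).trans (by linarith [hJM (φ (θ i) 0)])
  have hcL : ∀ i, |c (i + h) - c i| ≤ lJ * ε := fun i => by
    rw [add_sub_add_left_eq_sub]
    exact (hJlip _ _).trans
      (mul_le_mul_of_nonneg_left ((abs_le_eNorm _ 0).trans (hφθ i).le) hlJ)
  have hconv := abs_expConv_add_sub_le hω hθ hk hε hεω hG₀ (fun s => hg₀M _) (by positivity)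
    hG₀γ t
  have himp := abs_impulseSum_add_sub_le hω hθ hk hεω hcM hcL hγ ht
  calc _ = |(impulseSum (k 0) θ c (t + γ) - impulseSum (k 0) θ c t)
          - (expConv (k 0) G₀ (t + γ) - expConv (k 0) G₀ t)| := by ring_nf
    _ ≤ _ := (abs_sub _ _).trans (add_le_add himp hconv)
    _ = _ := by ring

end Model

theorem stmt8_general
    (m : ℕ) (ω : ℝ) (hω : 0 < ω) (θ : ℤ → ℝ)
    (hθ : ∀ i : ℤ, (i : ℝ) * ω ≤ θ i ∧ θ i < ((i : ℝ) + 1) * ω)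
    (k : Fin (m + 1) → ℝ) (hk : ∀ j, 0 < k j) (I₀ : ℝ)
    (g₀ : (Fin m → ℝ) → ℝ) (g : Fin (m + 1) → ℝ → ℝ) (J₀ : ℝ → ℝ)
    (l : Fin (m + 1) → ℝ) (lJ : ℝ) (mc : Fin (m + 1) → ℝ) (mJ : ℝ)
    (hl : ∀ j, 0 ≤ l j) (hlJ : 0 ≤ lJ) (hmc : ∀ j, 0 ≤ mc j) (hmJ : 0 ≤ mJ)
    (hg₀lip : ∀ z w : Fin m → ℝ, |g₀ z - g₀ w| ≤ l 0 * eNorm (fun i => z i - w i))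
    (hglip : ∀ j, j ≠ 0 → ∀ a b : ℝ, |g j a - g j b| ≤ l j * |a - b|)
    (hJlip : ∀ a b : ℝ, |J₀ a - J₀ b| ≤ lJ * |a - b|)
    (hg₀bd : ∀ z, |g₀ z| ≤ mc 0)
    (hgbd : ∀ j, j ≠ 0 → ∀ a, |g j a| ≤ mc j)
    (hJbd : ∀ a, |J₀ a| ≤ mJ)
 :
    ∃ C : ℝ, 0 ≤ C ∧
      ∀ ε : ℝ, 0 < ε → ε < ω / 4 → ∀ γ : ℝ, ∀ h : ℤ,
      ∀ φ : ℝ → Fin (m + 1) → ℝ, φ ∈ OmegaSet m ω k mc I₀ mJ →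
      (∀ i : ℤ, |θ (i + h) - θ i - γ| < ε) →
      (∀ t : ℝ, (∀ i : ℤ, ε < |t - θ i|) → eNorm (fun j => φ (t + γ) j - φ t j) < ε) →
      (∀ i : ℤ, eNorm (fun j => φ (θ (i + h)) j - φ (θ i) j) < ε) →
      ∀ t : ℝ, (∀ i : ℤ, ε < |t - θ i|) →
        eNorm (fun j => Tmap m θ k I₀ g₀ g J₀ φ (t + γ) j - Tmap m θ k I₀ g₀ g J₀ φ t j) ≤ C * ε := by
  have hconv_nonneg : ∀ j, ∀ L, 0 ≤ L →
      0 ≤ L / k j + 4 * mc j * exp (3 * k j * ω) * expWeightBound (k j) ω := fun j L hL => by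
    have := hk j; have := hmc j; have := expWeightBound_pos (hk j) hω; positivity
  have himp_nonneg : 0 ≤ (k 0 * (|I₀| + mJ) * exp (k 0 * ω) + lJ) * expWeightBound (k 0) ω := by
    have := hk 0; have := expWeightBound_pos (hk 0) hω; positivity
  refine ⟨2 * m * l 0 / k 0 + 4 * mc 0 * exp (3 * k 0 * ω) * expWeightBound (k 0) ω
      + (k 0 * (|I₀| + mJ) * exp (k 0 * ω) + lJ) * expWeightBound (k 0) ω
      + ∑ i : Fin m, (2 * l i.succ / k i.succ
        + 4 * mc i.succ * exp (3 * k i.succ * ω) * expWeightBound (k i.succ) ω),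
    add_nonneg (add_nonneg (hconv_nonneg 0 _ (by have := hl 0; positivity)) himp_nonneg)
      (Finset.sum_nonneg fun i _ => hconv_nonneg i.succ _ (by have := hl i.succ; positivity)), ?_⟩
  intro ε hε hεω γ h φ hφ hγ hφγ hφθ t ht
  have hεω' : ε ≤ ω := by linarith
  have h0 := abs_Tmap_add_sub_zero_le (I₀ := I₀) (g := g) hω hθ hε hεω' hφ.1 hφγ hγ hφθ (hk 0)
    (hl 0) hlJ hg₀lip hg₀bd hJlip hJbd ht
  have hsucc := fun i : Fin m => abs_Tmap_add_sub_succ_le (I₀ := I₀) (g₀ := g₀) (J₀ := J₀) hω hθ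
    hε hεω' hφ.1 hφγ i (hk _) (hl _) (hglip _ (Fin.succ_ne_zero i)) (hgbd _ (Fin.succ_ne_zero i)) t
  calc _ ≤ ∑ j, |Tmap m θ k I₀ g₀ g J₀ φ (t + γ) j - Tmap m θ k I₀ g₀ g J₀ φ t j| :=
        eNorm_le_sum_abs _
    _ = _ := Fin.sum_univ_succ _
    _ ≤ _ := add_le_add h0 (Finset.sum_le_sum fun i _ => hsucc i)
    _ = _ := by rw [← Finset.sum_mul]; ring

/-- There exists a constant `C ≥ 0`, depending only on the data
`m, ω, k, l, l_J, m₀,…,m_m, m_J, I₀`, such that for every `ε ∈ (0, ω/4)`, `γ ∈ ℝ`, `h ∈ ℤ`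
and `φ ∈ Ω` satisfying the almost-period hypotheses (i)–(iii), one has
`‖(Tφ)(t + γ) − (Tφ)(t)‖ ≤ C·ε` whenever `|t − θ_i| > ε` for all `i`
(the almost-period transfer estimate, Theorem 1, assertion 3). -/
theorem stmt8
    (m : ℕ) (hm : 1 ≤ m) (ω : ℝ) (hω : 0 < ω) (θ : ℤ → ℝ)
    (hθ : ∀ i : ℤ, (i : ℝ) * ω ≤ θ i ∧ θ i < ((i : ℝ) + 1) * ω)
    (k : Fin (m + 1) → ℝ) (hk : ∀ j, 0 < k j) (I₀ : ℝ) (hI : 0 < I₀)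
    (g₀ : (Fin m → ℝ) → ℝ) (g : Fin (m + 1) → ℝ → ℝ) (J₀ : ℝ → ℝ)
    (l : Fin (m + 1) → ℝ) (lJ : ℝ) (mc : Fin (m + 1) → ℝ) (mJ : ℝ)
    (hl : ∀ j, 0 ≤ l j) (hlJ : 0 ≤ lJ) (hmc : ∀ j, 0 ≤ mc j) (hmJ : 0 ≤ mJ)
    (hg₀lip : ∀ z w : Fin m → ℝ, |g₀ z - g₀ w| ≤ l 0 * eNorm (fun i => z i - w i))
    (hglip : ∀ j, j ≠ 0 → ∀ a b : ℝ, |g j a - g j b| ≤ l j * |a - b|)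
    (hJlip : ∀ a b : ℝ, |J₀ a - J₀ b| ≤ lJ * |a - b|)
    (hg₀bd : ∀ z, |g₀ z| ≤ mc 0)
    (hgbd : ∀ j, j ≠ 0 → ∀ a, |g j a| ≤ mc j)
    (hJbd : ∀ a, |J₀ a| ≤ mJ)
 :
    ∃ C : ℝ, 0 ≤ C ∧
      ∀ ε : ℝ, 0 < ε → ε < ω / 4 → ∀ γ : ℝ, ∀ h : ℤ,
      ∀ φ : ℝ → Fin (m + 1) → ℝ, φ ∈ OmegaSet m ω k mc I₀ mJ →
      (∀ i : ℤ, |θ (i + h) - θ i - γ| < ε) →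
      (∀ t : ℝ, (∀ i : ℤ, ε < |t - θ i|) → eNorm (fun j => φ (t + γ) j - φ t j) < ε) →
      (∀ i : ℤ, eNorm (fun j => φ (θ (i + h)) j - φ (θ i) j) < ε) →
      ∀ t : ℝ, (∀ i : ℤ, ε < |t - θ i|) →
        eNorm (fun j => Tmap m θ k I₀ g₀ g J₀ φ (t + γ) j - Tmap m θ k I₀ g₀ g J₀ φ t j) ≤ C * ε :=
  stmt8_general m ω hω θ hθ k hk I₀ g₀ g J₀ l lJ mc mJ hl hlJ hmc hmJ hg₀lip hglip hJlip hg₀bd hgbd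
    hJbd
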